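/- Let A be a Banach algebra, T, S : A → A continuous linear maps, and suppose A** has the T-w*w property (for each F in A**, the map G ↦ F·T''(G) is weak*-to-weak continuous). If every T''-S''-derivation from A** into A*** is inner (A** is weakly T''-S''-amenable), then every T-S-derivation from A into A* is inner (A is weakly T-S-amenable). -/

import Mathlib

/-!
The double adjoint `D''` of a `T`-`S`-derivation `D : A → A*` is a `T''`-`S''`-derivation
`A** → A***`. For `F` in the canonical image of `A` this is the derivation rule for `D` read
through the adjoints; for general `F` both sides are weak-star continuous in `F` (for the term
involving `T''(F)` this is the `T`-`w*w` property) and `A` is weak-star dense in `A**`. If `D''` is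
implemented by `Φ ∈ A***`, then `D` is implemented by the restriction of `Φ` to `A ⊆ A**`.
-/

open NormedSpace ContinuousLinearMap Filter

set_option maxHeartbeats 1000000

/-- The topological dual of a seminormed space `E` (as `NormedSpace.Dual` was defined in the
older Mathlib; it has since been replaced by `StrongDual`). -/
abbrev NormedSpace.Dual (𝕜 : Type*) [NormedField 𝕜] (E : Type*) [SeminormedAddCommGroup E]
    [NormedSpace 𝕜 E] : Type _ :=
  E →L[𝕜] 𝕜

noncomputable section

/-- The adjoint (dual map) of a continuous linear map: `dMap T φ = φ ∘ T`. -/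
def dMap {E F : Type*} [NormedAddCommGroup E] [NormedSpace ℝ E]
    [NormedAddCommGroup F] [NormedSpace ℝ F] (T : E →L[ℝ] F) :
    Dual ℝ F →L[ℝ] Dual ℝ E :=
  (ContinuousLinearMap.compL ℝ E F ℝ).flip T

/-- The double adjoint of a continuous linear map. -/
def ddMap {E F : Type*} [NormedAddCommGroup E] [NormedSpace ℝ E]
    [NormedAddCommGroup F] [NormedSpace ℝ F] (T : E →L[ℝ] F) :
    Dual ℝ (Dual ℝ E) →L[ℝ] Dual ℝ (Dual ℝ F) :=
  dMap (dMap T)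

set_option synthInstance.maxHeartbeats 400000 in
/-- The (first, left) Arens extension of a bounded bilinear map `m : E × F → G` to the
biduals, via the classical three steps:
`⟨g'·e, f⟩ = ⟨g', m e f⟩`, `⟨Ψ·g', e⟩ = ⟨Ψ, g'·e⟩`, `⟨arensExt m Φ Ψ, g'⟩ = ⟨Φ, Ψ·g'⟩`. -/
def arensExt {E F G : Type*} [NormedAddCommGroup E] [NormedSpace ℝ E]
    [NormedAddCommGroup F] [NormedSpace ℝ F] [NormedAddCommGroup G] [NormedSpace ℝ G]
    (m : E →L[ℝ] F →L[ℝ] G) :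
    Dual ℝ (Dual ℝ E) →L[ℝ] Dual ℝ (Dual ℝ F) →L[ℝ] Dual ℝ (Dual ℝ G) :=
  let s1 : E →L[ℝ] (Dual ℝ G →L[ℝ] Dual ℝ F) :=
    ((ContinuousLinearMap.compL ℝ F G ℝ).flip).comp m
  let s2 : Dual ℝ G →L[ℝ] (Dual ℝ (Dual ℝ F) →L[ℝ] Dual ℝ E) :=
    ((ContinuousLinearMap.compL ℝ E (Dual ℝ F) ℝ).flip).comp s1.flip
  (((ContinuousLinearMap.compL ℝ (Dual ℝ G) (Dual ℝ E) ℝ).flip).comp s2.flip).flip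

/-- The first Arens product on the bidual of a (possibly non-unital) Banach algebra:
`⟨F G, a'⟩ = ⟨F, G·a'⟩` where `⟨G·a', a⟩ = ⟨G, a'·a⟩` and `⟨a'·a, b⟩ = ⟨a', a*b⟩`. -/
def arens1 (A : Type*) [NonUnitalNormedRing A] [NormedSpace ℝ A]
    [IsScalarTower ℝ A A] [SMulCommClass ℝ A A] :
    Dual ℝ (Dual ℝ A) →L[ℝ] Dual ℝ (Dual ℝ A) →L[ℝ] Dual ℝ (Dual ℝ A) :=
  arensExt (ContinuousLinearMap.mul ℝ A)

/-- The second Arens product on the bidual of a (possibly non-unital) Banach algebra: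
`⟨F ∘ G, a'⟩ = ⟨G, a'∘F⟩` where `⟨a'∘F, a⟩ = ⟨F, a∘a'⟩` and `⟨a∘a', b⟩ = ⟨a', b*a⟩`. -/
def arens2 (A : Type*) [NonUnitalNormedRing A] [NormedSpace ℝ A]
    [IsScalarTower ℝ A A] [SMulCommClass ℝ A A] :
    Dual ℝ (Dual ℝ A) →L[ℝ] Dual ℝ (Dual ℝ A) →L[ℝ] Dual ℝ (Dual ℝ A) :=
  (arensExt ((ContinuousLinearMap.mul ℝ A).flip)).flip

/-- `f`, a map from a dual space to a normed space, is weak-star-to-weak continuous. -/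
def WstarToWeakContinuous {E F : Type*} [NormedAddCommGroup E] [NormedSpace ℝ E]
    [NormedAddCommGroup F] [NormedSpace ℝ F]
    (f : Dual ℝ E → F) : Prop :=
  Continuous fun x : WeakDual ℝ E => toWeakSpace ℝ F (f x)
variable {A : Type*} [NonUnitalNormedRing A] [NormedSpace ℝ A]
  [IsScalarTower ℝ A A] [SMulCommClass ℝ A A] [CompleteSpace A]

variable (A) in
/-- The left action of `a ∈ A` on `a' ∈ A*`: `⟨a·a', x⟩ = ⟨a', x*a⟩`. -/
def dualActL (a : A) : Dual ℝ A →L[ℝ] Dual ℝ A :=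
  dMap ((ContinuousLinearMap.mul ℝ A).flip a)

variable (A) in
/-- The right action of `a ∈ A` on `a' ∈ A*`: `⟨a'·a, x⟩ = ⟨a', a*x⟩`. -/
def dualActR (a : A) : Dual ℝ A →L[ℝ] Dual ℝ A :=
  dMap (ContinuousLinearMap.mul ℝ A a)

variable (A) in
/-- The left action of `H ∈ A**` (first Arens product) on `Φ ∈ A***`:
`⟨H·Φ, G⟩ = ⟨Φ, G H⟩`. -/
def triActL (H : Dual ℝ (Dual ℝ A)) :
    Dual ℝ (Dual ℝ (Dual ℝ A)) →L[ℝ] Dual ℝ (Dual ℝ (Dual ℝ A)) :=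
  dMap (E := Dual ℝ (Dual ℝ A)) (F := Dual ℝ (Dual ℝ A)) ((arens1 A).flip H)

variable (A) in
/-- The right action of `H ∈ A**` (first Arens product) on `Φ ∈ A***`:
`⟨Φ·H, G⟩ = ⟨Φ, H G⟩`. -/
def triActR (H : Dual ℝ (Dual ℝ A)) :
    Dual ℝ (Dual ℝ (Dual ℝ A)) →L[ℝ] Dual ℝ (Dual ℝ (Dual ℝ A)) :=
  dMap (E := Dual ℝ (Dual ℝ A)) (F := Dual ℝ (Dual ℝ A)) (arens1 A H)

section WeakStarDensity

variable {𝕜 E : Type*} [NontriviallyNormedField 𝕜] [SeminormedAddCommGroup E] [NormedSpace 𝕜 E]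

theorem exists_forall_mem_apply_eq (F : Dual 𝕜 (Dual 𝕜 E)) (s : Finset (Dual 𝕜 E)) :
    ∃ x : E, ∀ φ ∈ s, φ x = F φ := by
  classical
  let e : E →ₗ[𝕜] s → 𝕜 := LinearMap.pi fun φ : s => (φ : Dual 𝕜 E).toLinearMap
  suffices (fun φ : s => F φ) ∈ LinearMap.range e by
    obtain ⟨x, hx⟩ := this
    exact ⟨x, fun φ hφ => congrFun hx ⟨φ, hφ⟩⟩
  -- A functional `ξ` on `𝕜^s` killing the range of `e` is a linear relation among the `φ ∈ s`,
  -- which `F` preserves.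
  rw [← Subspace.forall_mem_dualAnnihilator_apply_eq_zero_iff]
  intro ξ hξ
  have hcomb : ∑ φ : s, ξ (fun ψ => if φ = ψ then 1 else 0) • (φ : Dual 𝕜 E) = 0 := by
    ext x
    have := (Submodule.mem_dualAnnihilator _).1 hξ (e x) ⟨x, rfl⟩
    rw [LinearMap.pi_apply_eq_sum_univ] at this
    simpa [e, mul_comm] using this
  rw [LinearMap.pi_apply_eq_sum_univ]
  simpa [mul_comm] using congrArg F hcomb

theorem denseRange_inclusionInDoubleDualWeak : DenseRange (inclusionInDoubleDualWeak 𝕜 E) := by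
  intro F
  choose x hx using exists_forall_mem_apply_eq (E := E) F
  refine mem_closure_of_tendsto (b := atTop) (f := fun s => inclusionInDoubleDualWeak 𝕜 E (x s))
    ?_ (.of_forall fun s => Set.mem_range_self _)
  refine tendsto_iff_forall_eval_tendsto_topDualPairing.2 fun φ => tendsto_const_nhds.congr' ?_
  filter_upwards [eventually_ge_atTop {φ}] with s hs
  exact (hx s φ (hs (Finset.mem_singleton_self φ))).symm

end WeakStarDensity

section BidualDerivation

variable {A : Type*} [NonUnitalNormedRing A] [NormedSpace ℝ A]
  [IsScalarTower ℝ A A] [SMulCommClass ℝ A A]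

local notation "ι" => inclusionInDoubleDual ℝ A

variable (A) in
/-- `bidualActDual A φ G` is the paper's `G·φ ∈ A*`, `⟨G·φ, a⟩ = ⟨G, φ·a⟩`; by construction
`⟨F G, φ⟩ = ⟨F, G·φ⟩`. -/
def bidualActDual : Dual ℝ A →L[ℝ] Dual ℝ (Dual ℝ A) →L[ℝ] Dual ℝ A :=
  (compL ℝ A (Dual ℝ A) ℝ).flip.comp ((compL ℝ A A ℝ).flip.comp (mul ℝ A)).flip

variable {T S : A →L[ℝ] A} {D : A →L[ℝ] Dual ℝ A}

theorem ddMap_arens1_inclusionInDoubleDual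
    (hD : ∀ a b : A, D (a * b) = dualActL A (T a) (D b) + dualActR A (S b) (D a))
    (a : A) (G : Dual ℝ (Dual ℝ A)) :
    ddMap D (arens1 A (ι a) G) =
      triActL A (ddMap T (ι a)) (ddMap D G) + triActR A (ddMap S G) (ddMap D (ι a)) := by
  ext H
  have hact : dualActR A a (dMap D H) =
      dMap D (arens1 A H (ι (T a))) + dMap S (bidualActDual A (D a) H) := by
    ext b
    show H (D (a * b)) = H (dualActL A (T a) (D b)) + H (dualActR A (S b) (D a))
    rw [hD, map_add]
  show G (dualActR A a (dMap D H)) = _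
  rw [hact, map_add]
  rfl

theorem ddMap_arens1
    (hw : ∀ F : Dual ℝ (Dual ℝ A),
      WstarToWeakContinuous fun G : Dual ℝ (Dual ℝ A) => arens1 A F (ddMap T G))
    (hD : ∀ a b : A, D (a * b) = dualActL A (T a) (D b) + dualActR A (S b) (D a))
    (F G : Dual ℝ (Dual ℝ A)) :
    ddMap D (arens1 A F G) =
      triActL A (ddMap T F) (ddMap D G) + triActR A (ddMap S G) (ddMap D F) := by
  ext H
  -- Both sides are weak-star continuous in `F` (the first summand by `hw`) and agree on the
  -- weak-star dense image of `A`.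
  have hlhs : Continuous fun F : WeakDual ℝ (Dual ℝ A) => ddMap D (arens1 A F G) H :=
    WeakDual.eval_continuous (bidualActDual A (dMap D H) G)
  have hrhs : Continuous fun F : WeakDual ℝ (Dual ℝ A) =>
      (triActL A (ddMap T F) (ddMap D G) + triActR A (ddMap S G) (ddMap D F)) H :=
    ((WeakBilin.eval_continuous (topDualPairing ℝ (Dual ℝ (Dual ℝ A))).flip (ddMap D G)).comp
      (hw H)).add (WeakDual.eval_continuous _)
  have hagree := funext fun a => DFunLike.congr_fun (ddMap_arens1_inclusionInDoubleDual hD a G) H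
  exact congrFun (denseRange_inclusionInDoubleDualWeak.equalizer hlhs hrhs hagree) F

end BidualDerivation

/-- If `A**` has the `T`-`w*w` property and every `T''`-`S''`-derivation `A** → A***` is
inner (`A**` is weakly `T''`-`S''`-amenable), then every `T`-`S`-derivation `A → A*` is
inner (`A` is weakly `T`-`S`-amenable). -/
theorem weaklyTSamenable_of_bidual
    (T S : A →L[ℝ] A)
    (hw : ∀ F : Dual ℝ (Dual ℝ A),
      WstarToWeakContinuous fun G : Dual ℝ (Dual ℝ A) => arens1 A F (ddMap T G))
    (hamen : ∀ 𝒟 : Dual ℝ (Dual ℝ A) →L[ℝ] Dual ℝ (Dual ℝ (Dual ℝ A)),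
      (∀ F G : Dual ℝ (Dual ℝ A),
        𝒟 (arens1 A F G) =
          triActL A (ddMap T F) (𝒟 G) + triActR A (ddMap S G) (𝒟 F)) →
      ∃ Φ : Dual ℝ (Dual ℝ (Dual ℝ A)), ∀ F : Dual ℝ (Dual ℝ A),
        𝒟 F = triActL A (ddMap T F) Φ - triActR A (ddMap S F) Φ)
    (D : A →L[ℝ] Dual ℝ A)
    (hD : ∀ a b : A, D (a * b) = dualActL A (T a) (D b) + dualActR A (S b) (D a)) :
    ∃ f : Dual ℝ A, ∀ a : A, D a = dualActL A (T a) f - dualActR A (S a) f := by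
  obtain ⟨Φ, hΦ⟩ := hamen (ddMap D) (ddMap_arens1 hw hD)
  refine ⟨Φ.comp (inclusionInDoubleDual ℝ A), fun a => ?_⟩
  ext b
  -- The actions of `A**` on `A***` restrict along the canonical embeddings to those of `A` on `A*`.
  exact DFunLike.congr_fun (hΦ (inclusionInDoubleDual ℝ A a)) (inclusionInDoubleDual ℝ A b)
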